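/- Let C be a commutative Noetherian ring, A = C{a₁,…,a_ℓ} an affine C-algebra with A ⊆ M_n(K) for a commutative C-algebra K. If K is reduced, then every nil subalgebra N of A satisfies N^n = 0. -/

import Mathlib

/-!
Map `K` to the residue field `κ(p)` of a prime `p`. The image of `N` is a multiplicatively closed
set `S` of nilpotent matrices over a field, and Levitzki's argument applies: a nonzero `a ∈ S` of
minimal rank satisfies `a x a = 0` for `x ∈ S ∪ {1}` (otherwise the nilpotent `a x` would map
`range a` onto itself), so `range a + S (range a)` is a proper nonzero `S`-invariant subspace, and
induction on the dimension, applied to this subspace and to the quotient by it, shows that products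
of `n` elements of `S` vanish. So the entries of a product of `n` elements of `N` lie in every prime
of `K`, hence are nilpotent, hence zero.
-/

open Module LinearMap

section Semiring

variable {R M M' G : Type*} [Semiring R] [AddCommMonoid M] [Module R M] [AddCommMonoid M']
  [Module R M']

theorem LinearMap.comp_list_prod_map (π : M →ₗ[R] M') {φ : G → End R M} {ψ : G → End R M'}
    (h : ∀ g, π ∘ₗ φ g = ψ g ∘ₗ π) (l : List G) :
    π ∘ₗ (l.map φ).prod = (l.map ψ).prod ∘ₗ π := by
  induction l with
  | nil => rfl
  | cons g l ih =>
    simp only [List.map_cons, List.prod_cons, Module.End.mul_eq_comp, ← comp_assoc, h g]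
    rw [comp_assoc, ih, comp_assoc]

theorem Submodule.eq_bot_of_map_eq_self_of_isNilpotent {f : End R M} (hf : IsNilpotent f)
    {W : Submodule R M} (hW : W.map f = W) : W = ⊥ := by
  obtain ⟨k, hk⟩ := hf
  have hpow : ∀ m : ℕ, W.map (f ^ m) = W := by
    intro m
    induction m with
    | zero => exact Submodule.map_id W
    | succ m ih => rw [pow_succ, Module.End.mul_eq_comp, Submodule.map_comp, hW, ih]
  simpa [hk] using (hpow k).symm

end Semiring

namespace Submodule

variable {R M G : Type*} [Ring R] [AddCommGroup M] [Module R M] [Semigroup G]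
variable (W : Submodule R M) (φ : G →ₙ* End R M) (hW : ∀ g, W ≤ W.comap (φ g))

def restrictMulHom : G →ₙ* End R W where
  toFun g := (φ g).restrict (hW g)
  map_mul' g h := by ext; simp

def mapQMulHom : G →ₙ* End R (M ⧸ W) where
  toFun g := W.mapQ W (φ g) (hW g)
  map_mul' g h := by ext; simp

theorem list_prod_map_append_eq_zero (l₁ l₂ : List G)
    (h₁ : (l₁.map (W.restrictMulHom φ hW)).prod = 0) (h₂ : (l₂.map (W.mapQMulHom φ hW)).prod = 0) :
    ((l₁ ++ l₂).map φ).prod = 0 := by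
  have hrange : range (l₂.map φ).prod ≤ W := by
    have := W.mkQ.comp_list_prod_map (ψ := W.mapQMulHom φ hW)
      (fun g ↦ (W.mapQ_mkQ W (φ g) (h := hW g)).symm) l₂
    rw [h₂, zero_comp] at this
    rw [← W.ker_mkQ, range_le_ker_iff, this]
  have hker : W ≤ ker (l₁.map φ).prod := by
    have := W.subtype.comp_list_prod_map (φ := W.restrictMulHom φ hW)
      (fun g ↦ subtype_comp_restrict (hW g)) l₁
    rw [h₁, comp_zero] at this
    rw [← W.range_subtype, range_le_ker_iff, ← this]
  rw [List.map_append, List.prod_append, Module.End.mul_eq_comp, ← range_le_ker_iff]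
  exact hrange.trans hker

end Submodule

section Field

variable {F V G : Type*} [Field F] [AddCommGroup V] [Module F V] [FiniteDimensional F V]

theorem Module.End.eq_zero_of_isNilpotent_mul_of_finrank_range_le {a x : End F V}
    (hax : IsNilpotent (a * x)) (hrank : finrank F (range a) ≤ finrank F (range (a * x * a))) :
    a = 0 := by
  have hle : range (a * x * a) ≤ range a := by
    rw [mul_assoc, Module.End.mul_eq_comp]
    exact range_comp_le_range _ _
  have hmap : (range a).map (a * x) = range a := by
    rw [← range_comp, ← Module.End.mul_eq_comp]
    exact Submodule.eq_of_le_of_finrank_le hle hrank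
  exact range_eq_bot.1 (Submodule.eq_bot_of_map_eq_self_of_isNilpotent hax hmap)

variable [Semigroup G] (φ : G →ₙ* End F V) (hφ : ∀ g, IsNilpotent (φ g))
include hφ

theorem MulHom.exists_ne_zero_mul_mul_eq_zero (h0 : ∃ g, φ g ≠ 0) :
    ∃ g, φ g ≠ 0 ∧ φ g * φ g = 0 ∧ ∀ h, φ g * φ h * φ g = 0 := by
  obtain ⟨g, hg, hmin⟩ := (InvImage.wf (fun g ↦ finrank F (range (φ g))) wellFounded_lt).has_min
    {g | φ g ≠ 0} h0
  have key {x : End F V} {y : G} (hx : IsNilpotent (φ g * x)) (hy : φ y = φ g * x * φ g) :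
      φ g * x * φ g = 0 := by
    by_contra hne
    refine hg (Module.End.eq_zero_of_isNilpotent_mul_of_finrank_range_le hx ?_)
    rw [← hy]
    exact not_lt.1 (hmin y (show φ y ≠ 0 from hy ▸ hne))
  refine ⟨g, hg, by simpa using key (x := 1) (y := g * g) (by simpa using hφ g) (by simp), ?_⟩
  intro h
  exact key (y := g * h * g) (by rw [← map_mul]; exact hφ _) (by simp)

theorem MulHom.exists_invariant_submodule (h0 : ∃ g, φ g ≠ 0) :
    ∃ W : Submodule F V, W ≠ ⊥ ∧ W ≠ ⊤ ∧ ∀ g, W ≤ W.comap (φ g) := by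
  obtain ⟨g, hg, hsq, hsandwich⟩ := φ.exists_ne_zero_mul_mul_eq_zero hφ h0
  set a := φ g
  let W := range a ⊔ ⨆ h, range (φ h * a)
  have hWker : W ≤ ker a := by
    refine sup_le (range_le_ker_iff.2 hsq) (iSup_le fun h ↦ range_le_ker_iff.2 ?_)
    rw [← Module.End.mul_eq_comp, ← mul_assoc, hsandwich]
  refine ⟨W, ?_, ?_, fun k ↦ Submodule.map_le_iff_le_comap.1 ?_⟩
  · exact ne_bot_of_le_ne_bot (range_eq_bot.not.2 hg) le_sup_left
  · exact fun htop ↦ hg (ker_eq_top.1 (top_le_iff.1 (htop ▸ hWker)))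
  · rw [Submodule.map_sup, Submodule.map_iSup, ← range_comp]
    refine sup_le (le_sup_of_le_right (le_iSup_of_le k le_rfl)) (iSup_le fun h ↦ ?_)
    rw [← range_comp, ← Module.End.mul_eq_comp, ← mul_assoc, ← map_mul]
    exact le_sup_of_le_right (le_iSup_of_le (k * h) le_rfl)

theorem MulHom.list_prod_map_eq_zero_of_isNilpotent (l : List G) (hl : finrank F V ≤ l.length) :
    (l.map φ).prod = 0 := by
  induction hd : finrank F V using Nat.strong_induction_on generalizing V l with
  | _ d ih =>
  by_cases h0 : ∀ g, φ g = 0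
  · cases l with
    | nil =>
      have : Subsingleton V := finrank_zero_iff (R := F) |>.1 (by simpa [hd] using hl)
      exact Subsingleton.elim _ _
    | cons g l => simp [h0]
  obtain ⟨W, hW_ne_bot, hW_ne_top, hW⟩ := φ.exists_invariant_submodule hφ (not_forall.1 h0)
  have hdim := W.finrank_quotient_add_finrank
  have hW_pos : 0 < finrank F W := Nat.pos_of_ne_zero (Submodule.finrank_eq_zero.not.2 hW_ne_bot)
  have hW_lt : finrank F W < d := hd ▸ Submodule.finrank_lt hW_ne_top
  rw [← List.take_append_drop (finrank F W) l]
  refine W.list_prod_map_append_eq_zero φ hW _ _ (ih _ hW_lt _ ?_ _ ?_ rfl)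
    (ih _ (by omega) _ ?_ _ ?_ rfl)
  · exact fun g ↦ Module.End.isNilpotent.restrict (hW g) (hφ g)
  · rw [List.length_take]; omega
  · exact fun g ↦ Module.End.IsNilpotent.mapQ (hW g) (hφ g)
  · rw [List.length_drop]; omega

end Field

theorem Matrix.list_prod_map_eq_zero_of_isNilpotent {F ι G : Type*} [Field F] [Fintype ι]
    [DecidableEq ι] [Semigroup G] (φ : G →ₙ* Matrix ι ι F) (hφ : ∀ g, IsNilpotent (φ g))
    (l : List G) (hl : Fintype.card ι ≤ l.length) : (l.map φ).prod = 0 := by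
  let e := (Matrix.toLinAlgEquiv' (R := F) (n := ι)).toRingEquiv
  have h := ((e : Matrix ι ι F →ₙ* End F (ι → F)).comp φ).list_prod_map_eq_zero_of_isNilpotent
    (fun g ↦ (hφ g).map e) l (by rwa [finrank_fintype_fun_eq_card])
  rw [MulHom.coe_comp, ← List.map_map, MulHom.coe_coe, ← map_list_prod e] at h
  exact e.map_eq_zero_iff.1 h

theorem IsReduced.eq_zero_of_forall_algebraMap_residueField {K : Type*} [CommRing K] [IsReduced K]
    {x : K} (hx : ∀ (p : Ideal K) [p.IsPrime], algebraMap K p.ResidueField x = 0) : x = 0 := by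
  have : x ∈ nilradical K := by
    rw [nilradical_eq_sInf]
    exact Submodule.mem_sInf.2 fun (p : Ideal K) (_ : p.IsPrime) ↦ by
      have := hx p
      rwa [← RingHom.mem_ker, Ideal.ker_algebraMap_residueField] at this
  rwa [nilradical_eq_zero] at this

theorem stmt_8_general (C : Type*) [CommRing C]
    (K : Type*) [CommRing K] [Algebra C K] [IsReduced K] (n : ℕ)
    (N : NonUnitalSubalgebra C (Matrix (Fin n) (Fin n) K))
    (hnil : ∀ a ∈ N, IsNilpotent a) :
    ∀ f : Fin n → Matrix (Fin n) (Fin n) K, (∀ i, f i ∈ N) → (List.ofFn f).prod = 0 := by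
  intro f hf
  ext i j
  refine IsReduced.eq_zero_of_forall_algebraMap_residueField fun p _ ↦ ?_
  let ψ : Matrix (Fin n) (Fin n) K →+* Matrix (Fin n) (Fin n) p.ResidueField :=
    (algebraMap K p.ResidueField).mapMatrix
  let φ : N →ₙ* Matrix (Fin n) (Fin n) p.ResidueField :=
    (ψ : _ →ₙ* _).comp (MulMemClass.subtype N)
  have h := Matrix.list_prod_map_eq_zero_of_isNilpotent φ (fun a ↦ (hnil a a.2).map ψ)
    (List.ofFn fun i ↦ (⟨f i, hf i⟩ : N)) (by simp)
  rw [MulHom.coe_comp, ← List.map_map, List.map_ofFn, MulHom.coe_coe, ← map_list_prod ψ] at h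
  exact congrFun₂ h i j

/-- Let `C` be a commutative Noetherian ring and `A` an affine (finitely generated)
`C`-subalgebra of `M_n(K)` for a commutative `C`-algebra `K`.  If `K` is reduced, then
every nil subalgebra `N` of `A` satisfies `N^n = 0`: any product of `n` elements of `N`
vanishes. -/
theorem stmt_8 (C : Type*) [CommRing C] [IsNoetherianRing C]
    (K : Type*) [CommRing K] [Algebra C K] [IsReduced K] (n : ℕ)
    (A : Subalgebra C (Matrix (Fin n) (Fin n) K)) (hA : A.FG)
    (N : NonUnitalSubalgebra C (Matrix (Fin n) (Fin n) K))
    (hNA : (N : Set (Matrix (Fin n) (Fin n) K)) ⊆ (A : Set (Matrix (Fin n) (Fin n) K)))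
    (hnil : ∀ a ∈ N, IsNilpotent a) :
    ∀ f : Fin n → Matrix (Fin n) (Fin n) K, (∀ i, f i ∈ N) → (List.ofFn f).prod = 0 :=
  stmt_8_general C K n N hnil
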